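/- arXiv:2311.10978 — 5 statements merged into one kernel-verified Lean document; each statement's English description precedes it below -/
import Mathlib

section
/- Let $T$ be the $n \times n$ Hessenberg–Toeplitz matrix with entries $T_{ij} = a_{i-j+1}$ for $i \ge j$, $T_{ij} = 1$ for $j = i+1$, and $T_{ij} = 0$ for $j > i+1$. For a nonempty set $S \subseteq \{1,\dots,n\}$, let $\tau_S(T)$ denote the minor of $T$ with rows indexed by $S$ and columns given by the first $|S|$ columns; set $\tau_\emptyset(T)=1$. Assume all minors $\tau_{[j]}(T)$ for $j \le n$ are nonzero. Then $T = LU$ where $L$ is lower triangular with $L_{ij} = \tau_{\{i\}\cup[j-1]}(T)/\tau_{[j]}(T)$ for $i \ge j$ and $0$ otherwise, and $U$ is upper bidiagonal with $U_{ii} = \tau_{[i]}(T)/\tau_{[i-1]}(T)$, $U_{i,i+1}=1$, and $0$ otherwise. -/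
/-!
Because `U` is upper bidiagonal with unit superdiagonal, for `k ≤ i` the entry `(LU)_{ik}` is
`(τ_{{i} ∪ [k-1]}(T) + τ_{{i} ∪ [k-2]}(T)) / τ_{[k-1]}(T)`, so the theorem amounts to the
three-term recurrence `τ_{{i} ∪ [k-1]} = T_{ik} τ_{[k-1]} - τ_{{i} ∪ [k-2]}` (the entries with
`k > i` are immediate). The recurrence is the cofactor expansion of the minor along its last
column `k`: as `T` is lower Hessenberg with unit superdiagonal, within the rows `[k-1] ∪ {i}`
that column has only the entries `1` in row `k-1` and `T_{ik}` in row `i`.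
-/

/-- The initial minor of `T` with rows indexed by `S` (in increasing order) and
columns given by the first `S.card` columns. For `S = ∅` this is `1`. -/
noncomputable def tauInit {n : ℕ} (T : Matrix (Fin n) (Fin n) ℝ) (S : Finset (Fin n)) : ℝ :=
  Matrix.det (Matrix.of fun i j : Fin S.card =>
    T (S.orderEmbOfFin rfl i)
      ⟨(j : ℕ), lt_of_lt_of_le j.isLt (by simpa using S.card_le_univ)⟩)

open Matrix Finset

theorem Matrix.det_eq_of_col_last_hessenberg {R : Type*} [CommRing R] {m : ℕ}
    (M : Matrix (Fin (m + 2)) (Fin (m + 2)) R)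
    (h0 : ∀ p : Fin m, M p.castSucc.castSucc (Fin.last _) = 0)
    (h1 : M (Fin.last m).castSucc (Fin.last _) = 1) :
    M.det = M (Fin.last _) (Fin.last _) * (M.submatrix Fin.castSucc Fin.castSucc).det -
      (M.submatrix (Fin.last m).castSucc.succAbove Fin.castSucc).det := by
  rw [det_succ_column M (Fin.last _), Fin.sum_univ_castSucc, Fin.sum_univ_castSucc,
    Finset.sum_eq_zero fun p _ => by rw [h0, mul_zero, zero_mul], h1]
  simp only [Fin.succAbove_last, Fin.val_castSucc, Fin.val_last]
  rw [Even.neg_one_pow ⟨m + 1, rfl⟩, Odd.neg_one_pow ⟨m, by ring⟩]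
  ring

structure IsLowerHessenbergUnitSuperdiag {R : Type*} [Zero R] [One R] {n : ℕ}
    (T : Matrix (Fin n) (Fin n) R) : Prop where
  apply_of_succ_lt : ∀ p q : Fin n, (p : ℕ) + 1 < q → T p q = 0
  apply_of_eq_succ : ∀ p q : Fin n, (q : ℕ) = p + 1 → T p q = 1

theorem det_submatrix_snoc_castLE_succ {R : Type*} [CommRing R] {n : ℕ}
    {T : Matrix (Fin n) (Fin n) R} (hT : IsLowerHessenbergUnitSuperdiag T) (i : Fin n) {m : ℕ}
    (hm : m + 2 ≤ n) :
    (T.submatrix (Fin.snoc (α := fun _ => Fin n) (Fin.castLE (by omega : m + 1 ≤ n)) i)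
      (Fin.castLE hm)).det =
      T i ⟨m + 1, hm⟩ *
          (T.submatrix (Fin.castLE (by omega : m + 1 ≤ n)) (Fin.castLE (by omega))).det -
      (T.submatrix (Fin.snoc (α := fun _ => Fin n) (Fin.castLE (by omega : m ≤ n)) i)
          (Fin.castLE (by omega : m + 1 ≤ n))).det := by
  have hlead :
      (T.submatrix (Fin.snoc (α := fun _ => Fin n) (Fin.castLE (by omega : m + 1 ≤ n)) i)
        (Fin.castLE hm)).submatrix Fin.castSucc Fin.castSucc =
      T.submatrix (Fin.castLE (by omega : m + 1 ≤ n)) (Fin.castLE (by omega)) := by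
    ext p q
    simp
  have hdrop :
      (T.submatrix (Fin.snoc (α := fun _ => Fin n) (Fin.castLE (by omega : m + 1 ≤ n)) i)
        (Fin.castLE hm)).submatrix (Fin.last m).castSucc.succAbove Fin.castSucc =
      T.submatrix (Fin.snoc (α := fun _ => Fin n) (Fin.castLE (by omega : m ≤ n)) i)
        (Fin.castLE (by omega : m + 1 ≤ n)) := by
    ext p q
    induction p using Fin.lastCases with
    | last => simp
    | cast p => simp
  rw [det_eq_of_col_last_hessenberg _ (fun p => hT.apply_of_succ_lt _ _ (by simp))
    (hT.apply_of_eq_succ _ _ (by simp)), hlead, hdrop, submatrix_apply, Fin.snoc_last]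
  rfl

theorem tauInit_eq_det_submatrix {n k : ℕ} (T : Matrix (Fin n) (Fin n) ℝ) {S : Finset (Fin n)}
    (hS : S.card = k) (hk : k ≤ n) {f : Fin k → Fin n} (hfS : ∀ p, f p ∈ S) (hf : StrictMono f) :
    tauInit T S = (T.submatrix f (Fin.castLE hk)).det := by
  subst hS
  rw [Finset.orderEmbOfFin_unique rfl hfS hf]
  rfl

theorem tauInit_Iic {n : ℕ} (T : Matrix (Fin n) (Fin n) ℝ) (j : Fin n) :
    tauInit T (Iic j) = (T.submatrix (Fin.castLE j.isLt) (Fin.castLE j.isLt)).det :=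
  tauInit_eq_det_submatrix T (Fin.card_Iic j) j.isLt (fun p => by simp [Fin.le_def, p.is_le])
    (Fin.strictMono_castLE _)

theorem tauInit_insert_Iio {n : ℕ} (T : Matrix (Fin n) (Fin n) ℝ) {i j : Fin n} (hji : j ≤ i) :
    tauInit T (insert i (Iio j)) =
      (T.submatrix (Fin.snoc (α := fun _ => Fin n) (Fin.castLE j.is_le') i)
        (Fin.castLE j.isLt)).det := by
  refine tauInit_eq_det_submatrix T ?_ j.isLt (fun p => ?_) ?_
  · rw [card_insert_of_notMem (by simpa using hji), Fin.card_Iio]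
  · induction p using Fin.lastCases with
    | last => simp
    | cast p =>
      rw [Fin.snoc_castSucc, mem_insert, mem_Iio]
      exact Or.inr (Fin.lt_def.mpr p.isLt)
  · intro p q hpq
    induction q using Fin.lastCases with
    | last =>
      induction p using Fin.lastCases with
      | last => exact absurd hpq (lt_irrefl _)
      | cast p => simpa [Fin.lt_def] using p.isLt.trans_le hji
    | cast q =>
      induction p using Fin.lastCases with
      | last => exact absurd hpq (Fin.castSucc_lt_last q).not_gt
      | cast p => simpa using hpq

theorem tauInit_insert_Iio_of_val_eq_zero {n : ℕ} (T : Matrix (Fin n) (Fin n) ℝ) {i k : Fin n}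
    (hk : (k : ℕ) = 0) : tauInit T (insert i (Iio k)) = T i k := by
  have hIio : Iio k = ∅ := by ext; simp [Fin.lt_def, hk]
  rw [hIio, insert_empty, tauInit_eq_det_submatrix T (card_singleton i) (by omega)
    (f := fun _ => i) (by simp) (Subsingleton.strictMono _), det_unique]
  exact congrArg (T i) (Fin.ext hk.symm)

theorem tauInit_Iio_of_val_eq_zero {n : ℕ} (T : Matrix (Fin n) (Fin n) ℝ) {k : Fin n}
    (hk : (k : ℕ) = 0) : tauInit T (Iio k) = 1 := by
  have hIio : Iio k = ∅ := by ext; simp [Fin.lt_def, hk]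
  rw [hIio]
  exact det_fin_zero

theorem tauInit_insert_Iio_of_val_eq_succ {n : ℕ} {T : Matrix (Fin n) (Fin n) ℝ}
    (hT : IsLowerHessenbergUnitSuperdiag T) {i j k : Fin n} (hk : (k : ℕ) = j + 1) (hki : k ≤ i) :
    tauInit T (insert i (Iio k)) = T i k * tauInit T (Iic j) - tauInit T (insert i (Iio j)) := by
  obtain ⟨k, hkn⟩ := k
  subst hk
  rw [tauInit_insert_Iio T hki, tauInit_insert_Iio T ((Fin.le_def.mpr (by simp)).trans hki),
    tauInit_Iic, det_submatrix_snoc_castLE_succ hT i hkn]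

theorem mul_tauInit_Iic_eq_add {n : ℕ} {T : Matrix (Fin n) (Fin n) ℝ}
    (hT : IsLowerHessenbergUnitSuperdiag T) {i j k : Fin n} (hk : (k : ℕ) = j + 1) :
    T i k * tauInit T (Iic j) =
      (if (k : ℕ) ≤ i then tauInit T (insert i (Iio k)) else 0) +
        if (j : ℕ) ≤ i then tauInit T (insert i (Iio j)) else 0 := by
  rcases lt_trichotomy (k : ℕ) (i + 1) with h | h | h
  · rw [if_pos (by omega), if_pos (by omega),
      tauInit_insert_Iio_of_val_eq_succ hT hk (Fin.le_def.mpr (by omega))]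
    ring
  · obtain rfl : j = i := Fin.ext (by omega)
    rw [if_neg (by omega), if_pos le_rfl, Iio_insert, hT.apply_of_eq_succ _ _ (by omega)]
    ring
  · rw [if_neg (by omega), if_neg (by omega), hT.apply_of_succ_lt _ _ (by omega)]
    ring

def upperBidiagonal {R : Type*} [Zero R] [One R] {n : ℕ} (d : Fin n → R) :
    Matrix (Fin n) (Fin n) R :=
  of fun p q => if p = q then d p else if (q : ℕ) = p + 1 then 1 else 0

section upperBidiagonal

variable {R : Type*} [NonAssocSemiring R] {n : ℕ} (L : Matrix (Fin n) (Fin n) R) (d : Fin n → R)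

theorem mul_upperBidiagonal_apply_of_val_eq_zero {i k : Fin n} (hk : (k : ℕ) = 0) :
    (L * upperBidiagonal d) i k = L i k * d k := by
  rw [mul_apply, sum_eq_single k (fun p _ hpk => ?_) (by simp)]
  · simp [upperBidiagonal]
  · simp [upperBidiagonal, hpk, hk]

theorem mul_upperBidiagonal_apply_of_val_eq_succ {i j k : Fin n} (hk : (k : ℕ) = j + 1) :
    (L * upperBidiagonal d) i k = L i k * d k + L i j := by
  have hjk : j ≠ k := fun h => by simp [h] at hk
  rw [mul_apply, sum_eq_add_of_mem k j (mem_univ _) (mem_univ _) hjk.symm (fun p _ hp => ?_)]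
  · simp [upperBidiagonal, hjk, hk]
  · have : (k : ℕ) ≠ p + 1 := fun h => hp.1 (Fin.ext (by omega))
    simp [upperBidiagonal, hp.1, this]

end upperBidiagonal

/-- Indices are 0-based: the paper's `[j]` is `Finset.Iic j` and `[j-1]` is `Finset.Iio j`. -/
theorem TPHT_LU_decomposition (n : ℕ) (a : Fin n → ℝ)
    (T : Matrix (Fin n) (Fin n) ℝ)
    (hT : ∀ i j : Fin n, T i j =
      if (j : ℕ) ≤ (i : ℕ) then
        a ⟨(i : ℕ) - (j : ℕ), lt_of_le_of_lt (Nat.sub_le _ _) i.isLt⟩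
      else if (j : ℕ) = (i : ℕ) + 1 then 1 else 0)
    (hτ : ∀ j : Fin n, tauInit T (Finset.Iic j) ≠ 0) :
    T = (Matrix.of fun i j : Fin n =>
          if (j : ℕ) ≤ (i : ℕ) then
            tauInit T (insert i (Finset.Iio j)) / tauInit T (Finset.Iic j)
          else 0)
      * (Matrix.of fun i j : Fin n =>
          if i = j then tauInit T (Finset.Iic i) / tauInit T (Finset.Iio i)
          else if (j : ℕ) = (i : ℕ) + 1 then 1 else 0) := by
  have hHess : IsLowerHessenbergUnitSuperdiag T :=
    ⟨fun p q h => by rw [hT, if_neg (by omega), if_neg (by omega)],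
      fun p q h => by rw [hT, if_neg (by omega), if_pos h]⟩
  change T = _ * upperBidiagonal _
  ext i k
  obtain hk | ⟨j, hk⟩ : (k : ℕ) = 0 ∨ ∃ j : Fin n, (k : ℕ) = j + 1 := by
    rcases k with ⟨_ | m, hm⟩
    exacts [Or.inl rfl, Or.inr ⟨⟨m, by omega⟩, rfl⟩]
  · rw [mul_upperBidiagonal_apply_of_val_eq_zero _ _ hk, of_apply, if_pos (by omega),
      tauInit_Iio_of_val_eq_zero T hk, tauInit_insert_Iio_of_val_eq_zero T hk]
    field_simp [hτ k]
  · have hIio : tauInit T (Iio k) = tauInit T (Iic j) := by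
      congr 1
      ext x
      simp only [mem_Iio, mem_Iic, Fin.lt_def, Fin.le_def]
      omega
    have key := mul_tauInit_Iic_eq_add hHess (i := i) hk
    rw [mul_upperBidiagonal_apply_of_val_eq_succ _ _ hk, of_apply, of_apply, hIio]
    have hτj := hτ j
    have hτk := hτ k
    split_ifs at key ⊢ <;> field_simp <;> linarith
end

section
/- Let $\sigma > 0$, and let $m, p$ be positive integers. Define $\mu_p^{(m)} = \sum_{i_1+\cdots+i_m = p} \binom{p}{i_1}\cdots\binom{p}{i_m} \exp\left(\frac{\sigma^2 \sum_{j=1}^m i_j^2}{2}\right)$, where the sum is over nonnegative integer tuples summing to $p$. Then $\binom{mp}{p}\exp\left(\frac{\sigma^2 p^2}{2m}\right) \le \mu_p^{(m)} \le \binom{mp}{p}\exp\left(\frac{\sigma^2 p^2}{2}\right)$. -/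
/-!
The weights `∏ j, (p.choose (f j))` sum to `(m * p).choose p` by the generalized Vandermonde
identity, so both bounds follow termwise from `p ^ 2 / m ≤ ∑ j, f j ^ 2 ≤ p ^ 2` for every
composition `f` of `p` into `m` parts: the left inequality is Cauchy–Schwarz, the right one
holds because the parts are nonnegative.
-/

open Finset

theorem Finset.sum_piAntidiag_prod_choose {ι : Type*} [DecidableEq ι] (s : Finset ι)
    (a : ι → ℕ) (n : ℕ) :
    ∑ f ∈ piAntidiag s n, ∏ i ∈ s, (a i).choose (f i) = (∑ i ∈ s, a i).choose n := by
  induction s using Finset.cons_induction generalizing n with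
  | empty => cases n <;> simp
  | cons i s hi ih =>
    rw [piAntidiag_cons, sum_disjiUnion, sum_cons, Nat.add_choose_eq]
    refine sum_congr rfl fun q _ => ?_
    rw [sum_map, ← ih, mul_sum]
    refine sum_congr rfl fun g hg => ?_
    have hgi : g i = 0 := by_contra fun h => hi ((mem_piAntidiag.mp hg).2 i h)
    rw [prod_cons]
    refine congrArg₂ _ (by simp [hgi]) (prod_congr rfl fun j hj => ?_)
    simp [ne_of_mem_of_not_mem hj hi]

theorem Finset.sq_sum_div_card_le_sum_sq {ι 𝕜 : Type*} [Field 𝕜] [LinearOrder 𝕜]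
    [IsStrictOrderedRing 𝕜] (s : Finset ι) (f : ι → 𝕜) :
    (∑ i ∈ s, f i) ^ 2 / #s ≤ ∑ i ∈ s, f i ^ 2 :=
  div_le_of_le_mul₀ (Nat.cast_nonneg _) (sum_nonneg fun i _ => sq_nonneg _)
    (by rw [mul_comm]; exact sq_sum_le_card_mul_sum_sq)

namespace Finset.Nat

theorem sum_antidiagonalTuple_prod_choose (m p n : ℕ) :
    ∑ f ∈ antidiagonalTuple m n, ∏ j, p.choose (f j) = (m * p).choose n := by
  rw [← piAntidiag_univ_fin_eq_antidiagonalTuple]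
  simpa using sum_piAntidiag_prod_choose (univ : Finset (Fin m)) (fun _ => p) n

variable {m n : ℕ} {f : Fin m → ℕ}

theorem sum_cast_of_mem_antidiagonalTuple (hf : f ∈ antidiagonalTuple m n) :
    ∑ j, (f j : ℝ) = n := by
  rw [← (mem_antidiagonalTuple.mp hf), Nat.cast_sum]

theorem sq_div_le_sum_sq_of_mem_antidiagonalTuple (hf : f ∈ antidiagonalTuple m n) :
    (n : ℝ) ^ 2 / m ≤ ∑ j, (f j : ℝ) ^ 2 := by
  simpa [sum_cast_of_mem_antidiagonalTuple hf] using
    sq_sum_div_card_le_sum_sq univ fun j => (f j : ℝ)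

theorem sum_sq_le_sq_of_mem_antidiagonalTuple (hf : f ∈ antidiagonalTuple m n) :
    ∑ j, (f j : ℝ) ^ 2 ≤ (n : ℝ) ^ 2 := by
  rw [← sum_cast_of_mem_antidiagonalTuple hf]
  exact sum_sq_le_sq_sum_of_nonneg fun j _ => Nat.cast_nonneg _

end Finset.Nat

theorem moment_bounds_general (σ : ℝ) (m p : ℕ) :
    (((m * p).choose p : ℝ)) * Real.exp (σ ^ 2 * (p : ℝ) ^ 2 / (2 * m)) ≤
      (∑ f ∈ Finset.Nat.antidiagonalTuple m p,
        (∏ j : Fin m, (p.choose (f j) : ℝ)) *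
          Real.exp (σ ^ 2 * (∑ j : Fin m, ((f j : ℝ)) ^ 2) / 2)) ∧
    (∑ f ∈ Finset.Nat.antidiagonalTuple m p,
        (∏ j : Fin m, (p.choose (f j) : ℝ)) *
          Real.exp (σ ^ 2 * (∑ j : Fin m, ((f j : ℝ)) ^ 2) / 2)) ≤
      (((m * p).choose p : ℝ)) * Real.exp (σ ^ 2 * (p : ℝ) ^ 2 / 2) := by
  have hweights : ((m * p).choose p : ℝ) =
      ∑ f ∈ Nat.antidiagonalTuple m p, ∏ j, (p.choose (f j) : ℝ) := by
    exact_mod_cast (Nat.sum_antidiagonalTuple_prod_choose m p p).symm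
  rw [hweights, sum_mul, sum_mul]
  refine ⟨sum_le_sum fun f hf => ?_, sum_le_sum fun f hf => ?_⟩ <;> gcongr _ * Real.exp ?_
  · calc σ ^ 2 * (p : ℝ) ^ 2 / (2 * m) = σ ^ 2 * ((p : ℝ) ^ 2 / m) / 2 := by ring
      _ ≤ _ := by gcongr; exact Nat.sq_div_le_sum_sq_of_mem_antidiagonalTuple hf
  · gcongr
    exact Nat.sum_sq_le_sq_of_mem_antidiagonalTuple hf

/-- Bounds on the expected `p`-th spectral moment for iid log-normal symbol coefficients. -/
theorem moment_bounds (σ : ℝ) (hσ : 0 < σ) (m p : ℕ) (hm : 0 < m) (hp : 0 < p) :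
    (((m * p).choose p : ℝ)) * Real.exp (σ ^ 2 * (p : ℝ) ^ 2 / (2 * m)) ≤
      (∑ f ∈ Finset.Nat.antidiagonalTuple m p,
        (∏ j : Fin m, (p.choose (f j) : ℝ)) *
          Real.exp (σ ^ 2 * (∑ j : Fin m, ((f j : ℝ)) ^ 2) / 2)) ∧
    (∑ f ∈ Finset.Nat.antidiagonalTuple m p,
        (∏ j : Fin m, (p.choose (f j) : ℝ)) *
          Real.exp (σ ^ 2 * (∑ j : Fin m, ((f j : ℝ)) ^ 2) / 2)) ≤
      (((m * p).choose p : ℝ)) * Real.exp (σ ^ 2 * (p : ℝ) ^ 2 / 2) :=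
  moment_bounds_general σ m p
end

section
/- Let $X$ be an $n \times n$ lower Hessenberg matrix (superdiagonal entries equal to 1, zeros above the superdiagonal). For $1 < k \le n$, write $\det(xI_{k-1} - X^{(k-1)}) = x^{k-1} + \sum_{i=1}^{k-1} l_{ki} x^{i-1}$, where $X^{(k-1)}$ is the principal $(k-1)\times(k-1)$ submatrix, and let $L$ be the lower unipotent matrix with subdiagonal entries $l_{ki}$ (and $1$'s on the diagonal). Then $L^{-1} X L = c_X$, where $c_X$ is the companion matrix of the characteristic polynomial of $X$. -/
open Polynomial
open Matrix

lemma charmatrix_submatrix_inj {R : Type*} [CommRing R] {m n : Type*} [DecidableEq m]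
    [DecidableEq n] [Fintype m] [Fintype n] (M : Matrix n n R) (f : m → n)
    (hf : Function.Injective f) :
    (charmatrix M).submatrix f f = charmatrix (M.submatrix f f) := by
  ext i j
  by_cases h : i = j
  · subst h; simp
  · rw [Matrix.submatrix_apply, charmatrix_apply_ne _ _ _ (fun he => h (hf he)),
      charmatrix_apply_ne _ _ _ h, Matrix.submatrix_apply]

lemma succAbove_val {m : ℕ} (j : Fin (m+1)) (x : Fin m) :
    ((j.succAbove x : Fin (m+1)) : ℕ) = if (x:ℕ) < (j:ℕ) then (x:ℕ) else (x:ℕ)+1 := by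
  rcases lt_or_ge (x:ℕ) (j:ℕ) with h | h
  · rw [Fin.succAbove_of_castSucc_lt _ _ (by simpa [Fin.lt_def] using h)]
    simp [if_pos h]
  · rw [Fin.succAbove_of_le_castSucc _ _ (by simpa [Fin.le_def] using h)]
    simp [if_neg (not_lt.2 h)]

lemma minor_det (m : ℕ) (Y : Matrix (Fin (m+1)) (Fin (m+1)) ℝ)
    (hsup : ∀ i j : Fin (m+1), (j : ℕ) = (i : ℕ) + 1 → Y i j = 1)
    (hzero : ∀ i j : Fin (m+1), (j : ℕ) > (i : ℕ) + 1 → Y i j = 0)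
    (j : Fin (m+1)) (hj : (j : ℕ) < m) :
    ((charmatrix Y).submatrix Fin.castSucc j.succAbove).det
      = (-1)^(m - (j:ℕ)) *
        (Y.submatrix (Fin.castLE j.isLt.le) (Fin.castLE j.isLt.le)).charpoly := by
  set k : ℕ := (j : ℕ) with hk
  have hmk : k + (m - k) = m := by omega
  set e : Fin k ⊕ Fin (m - k) ≃ Fin m := finSumFinEquiv.trans (finCongr hmk) with he_def
  set M : Matrix (Fin m) (Fin m) ℝ[X] := (charmatrix Y).submatrix Fin.castSucc j.succAbove with hM
  have hdet : M.det = (M.submatrix e e).det := (Matrix.det_submatrix_equiv_self e M).symm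
  -- values of e
  have he1 : ∀ a : Fin k, ((e (Sum.inl a) : Fin m) : ℕ) = (a : ℕ) := by
    intro a; simp [he_def, finCongr_apply]
  have he2 : ∀ b : Fin (m - k), ((e (Sum.inr b) : Fin m) : ℕ) = k + (b : ℕ) := by
    intro b; simp [he_def, finCongr_apply]
  set A : Matrix (Fin k) (Fin k) ℝ[X] :=
    charmatrix (Y.submatrix (Fin.castLE j.isLt.le) (Fin.castLE j.isLt.le)) with hA
  set Cb : Matrix (Fin (m-k)) (Fin k) ℝ[X] :=
    Matrix.of (fun b a => M (e (Sum.inr b)) (e (Sum.inl a))) with hCb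
  set D : Matrix (Fin (m-k)) (Fin (m-k)) ℝ[X] :=
    Matrix.of (fun b b' => M (e (Sum.inr b)) (e (Sum.inr b'))) with hD
  have hblocks : M.submatrix e e = Matrix.fromBlocks A 0 Cb D := by
    ext x y
    cases x with
    | inl a =>
      cases y with
      | inl a' =>
        have h1 : (Fin.castSucc (e (Sum.inl a))) = Fin.castLE j.isLt.le a := by
          apply Fin.ext; simp [he1 a]
        have h2 : (j.succAbove (e (Sum.inl a'))) = Fin.castLE j.isLt.le a' := by
          apply Fin.ext
          rw [succAbove_val, he1]
          have := a'.isLt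
          simp only [Fin.coe_castLE]
          rw [if_pos (by omega)]
        simp only [Matrix.submatrix_apply, hM, Matrix.fromBlocks_apply₁₁]
        rw [h1, h2, hA, ← charmatrix_submatrix_inj _ _ (Fin.castLE_injective _)]
        rfl
      | inr b' =>
        have hcv : ((j.succAbove (e (Sum.inr b'))) : ℕ) = k + (b' : ℕ) + 1 := by
          rw [succAbove_val, he2, if_neg (by omega)]
        have hrv : ((Fin.castSucc (e (Sum.inl a))) : ℕ) = (a : ℕ) := by
          simp [he1 a]
        have ha := a.isLt
        simp only [Matrix.submatrix_apply, hM, Matrix.fromBlocks_apply₁₂, Matrix.zero_apply]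
        rw [charmatrix_apply_ne _ _ _ (Fin.ne_of_val_ne (by omega)),
          hzero _ _ (by omega), map_zero, neg_zero]
    | inr b =>
      cases y with
      | inl a => rfl
      | inr b' => rfl
  have hAdet : A.det = (Y.submatrix (Fin.castLE j.isLt.le) (Fin.castLE j.isLt.le)).charpoly := rfl
  have hDdet : D.det = (-1)^(m-k) := by
    have htri : D.BlockTriangular OrderDual.toDual := by
      intro b b' hbb
      have hbb' : (b : ℕ) < (b' : ℕ) := hbb
      have hcv : ((j.succAbove (e (Sum.inr b'))) : ℕ) = k + (b' : ℕ) + 1 := by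
        rw [succAbove_val, he2, if_neg (by omega)]
      have hrv : ((Fin.castSucc (e (Sum.inr b))) : ℕ) = k + (b : ℕ) := by
        simp [he2 b]
      show M (e (Sum.inr b)) (e (Sum.inr b')) = 0
      simp only [hM, Matrix.submatrix_apply]
      rw [charmatrix_apply_ne _ _ _ (Fin.ne_of_val_ne (by omega)),
        hzero _ _ (by omega), map_zero, neg_zero]
    rw [Matrix.det_of_lowerTriangular D htri]
    have hdiag : ∀ b : Fin (m-k), D b b = -1 := by
      intro b
      have hcv : ((j.succAbove (e (Sum.inr b))) : ℕ) = k + (b : ℕ) + 1 := by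
        rw [succAbove_val, he2, if_neg (by omega)]
      have hrv : ((Fin.castSucc (e (Sum.inr b))) : ℕ) = k + (b : ℕ) := by
        simp [he2 b]
      show M (e (Sum.inr b)) (e (Sum.inr b)) = -1
      simp only [hM, Matrix.submatrix_apply]
      rw [charmatrix_apply_ne _ _ _ (Fin.ne_of_val_ne (by omega)),
        hsup _ _ (by omega)]
      simp
    rw [Finset.prod_congr rfl (fun b _ => hdiag b)]
    simp
  rw [hdet, hblocks, Matrix.det_fromBlocks_zero₁₂, hAdet, hDdet, mul_comm]

lemma hess_rec (m : ℕ) (Y : Matrix (Fin (m+1)) (Fin (m+1)) ℝ)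
    (hsup : ∀ i j : Fin (m+1), (j : ℕ) = (i : ℕ) + 1 → Y i j = 1)
    (hzero : ∀ i j : Fin (m+1), (j : ℕ) > (i : ℕ) + 1 → Y i j = 0) :
    Y.charpoly = Polynomial.X * (Y.submatrix Fin.castSucc Fin.castSucc).charpoly
      - ∑ k : Fin (m+1), Polynomial.C (Y (Fin.last m) k) *
          (Y.submatrix (Fin.castLE k.isLt.le) (Fin.castLE k.isLt.le)).charpoly := by
  rw [Matrix.charpoly, Matrix.det_succ_row _ (Fin.last m)]
  have hterm : ∀ jj : Fin (m+1),
      (-1 : ℝ[X])^((Fin.last m : ℕ) + (jj:ℕ)) * charmatrix Y (Fin.last m) jj *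
        ((charmatrix Y).submatrix (Fin.last m).succAbove jj.succAbove).det
      = (if jj = Fin.last m then
          Polynomial.X * (Y.submatrix Fin.castSucc Fin.castSucc).charpoly else 0)
        - Polynomial.C (Y (Fin.last m) jj) *
            (Y.submatrix (Fin.castLE jj.isLt.le) (Fin.castLE jj.isLt.le)).charpoly := by
    intro jj
    by_cases hjj : jj = Fin.last m
    · subst hjj
      rw [if_pos rfl, Fin.succAbove_last, charmatrix_apply_eq]
      have hsign : ((-1 : ℝ[X]))^((Fin.last m : ℕ) + (Fin.last m : ℕ)) = 1 := by
        rw [Fin.val_last, ← two_mul, pow_mul]; norm_num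
      rw [hsign, one_mul, charmatrix_submatrix_inj _ _ (Fin.castSucc_injective m)]
      have hfun : (Fin.castLE (Fin.last m).isLt.le : Fin ((Fin.last m : ℕ)) → Fin (m+1))
          = Fin.castSucc := by
        funext x; apply Fin.ext; simp
      rw [hfun, ← Matrix.charpoly]
      ring
    · have hjlt : (jj:ℕ) < m := Fin.val_lt_last hjj
      rw [if_neg hjj, Fin.succAbove_last, minor_det m Y hsup hzero jj hjlt,
        charmatrix_apply_ne _ _ _ (Ne.symm hjj)]
      have hs : ((-1:ℝ[X]))^((Fin.last m : ℕ) + (jj:ℕ)) * (-1:ℝ[X])^(m - (jj:ℕ)) = 1 := by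
        rw [Fin.val_last, ← pow_add]
        have h2 : m + (jj:ℕ) + (m - (jj:ℕ)) = 2*m := by omega
        rw [h2, pow_mul]; norm_num
      linear_combination (-(Polynomial.C (Y (Fin.last m) jj) *
        (Y.submatrix (Fin.castLE jj.isLt.le) (Fin.castLE jj.isLt.le)).charpoly)) * hs
  rw [Finset.sum_congr rfl (fun jj _ => hterm jj), Finset.sum_sub_distrib]
  simp only [Finset.sum_ite_eq', Finset.mem_univ, if_true]

noncomputable def lead (n : ℕ) (X : Matrix (Fin n) (Fin n) ℝ) (k : ℕ) : ℝ[X] :=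
  if h : k ≤ n then (X.submatrix (Fin.castLE h) (Fin.castLE h)).charpoly else 0

lemma lead_eq {n k : ℕ} (X : Matrix (Fin n) (Fin n) ℝ) (h : k ≤ n) :
    lead n X k = (X.submatrix (Fin.castLE h) (Fin.castLE h)).charpoly := dif_pos h

lemma lead_self (n : ℕ) (X : Matrix (Fin n) (Fin n) ℝ) : lead n X n = X.charpoly := by
  rw [lead_eq X (le_refl n)]
  have hfun : (Fin.castLE (le_refl n)) = (id : Fin n → Fin n) := by
    funext x; apply Fin.ext; simp
  rw [hfun, Matrix.submatrix_id_id]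

lemma lead_natDegree {n k : ℕ} (X : Matrix (Fin n) (Fin n) ℝ) (h : k ≤ n) :
    (lead n X k).natDegree = k := by
  rw [lead_eq X h, Matrix.charpoly_natDegree_eq_dim, Fintype.card_fin]

lemma lead_coeff_self {n k : ℕ} (X : Matrix (Fin n) (Fin n) ℝ) (h : k ≤ n) :
    (lead n X k).coeff k = 1 := by
  have := (lead_eq X h ▸ (X.submatrix (Fin.castLE h) (Fin.castLE h)).charpoly_monic :
    (lead n X k).Monic)
  have hd := lead_natDegree X h
  simpa [hd] using this.coeff_natDegree

lemma lead_coeff_zero {n k j : ℕ} (X : Matrix (Fin n) (Fin n) ℝ) (h : k ≤ n) (hj : k < j) :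
    (lead n X k).coeff j = 0 := by
  apply Polynomial.coeff_eq_zero_of_natDegree_lt
  rw [lead_natDegree X h]; exact hj

noncomputable def gterm (n : ℕ) (X : Matrix (Fin n) (Fin n) ℝ) (m t : ℕ) : ℝ[X] :=
  if h : m < n ∧ t < n then Polynomial.C (X ⟨m, h.1⟩ ⟨t, h.2⟩) * lead n X t else 0

lemma gterm_eq {n m t : ℕ} (X : Matrix (Fin n) (Fin n) ℝ) (h1 : m < n) (h2 : t < n) :
    gterm n X m t = Polynomial.C (X ⟨m, h1⟩ ⟨t, h2⟩) * lead n X t := dif_pos ⟨h1, h2⟩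

lemma lead_rec (n : ℕ) (X : Matrix (Fin n) (Fin n) ℝ)
    (hsup : ∀ i j : Fin n, (j : ℕ) = (i : ℕ) + 1 → X i j = 1)
    (hzero : ∀ i j : Fin n, (j : ℕ) > (i : ℕ) + 1 → X i j = 0)
    (m : ℕ) (hm : m + 1 ≤ n) :
    lead n X (m+1) = Polynomial.X * lead n X m
      - ∑ t ∈ Finset.range (m+1), gterm n X m t := by
  set Y : Matrix (Fin (m+1)) (Fin (m+1)) ℝ :=
    X.submatrix (Fin.castLE hm) (Fin.castLE hm) with hY
  have hYsup : ∀ i j : Fin (m+1), (j : ℕ) = (i : ℕ) + 1 → Y i j = 1 := by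
    intro i j hij; exact hsup _ _ (by simpa using hij)
  have hYzero : ∀ i j : Fin (m+1), (j : ℕ) > (i : ℕ) + 1 → Y i j = 0 := by
    intro i j hij; exact hzero _ _ (by simpa using hij)
  have hrec := hess_rec m Y hYsup hYzero
  rw [lead_eq X hm, hrec]
  congr 1
  · congr 1
    rw [lead_eq X (by omega : m ≤ n), hY, Matrix.submatrix_submatrix]
    congr 1 <;> (funext x; apply Fin.ext; simp)
  · rw [← Fin.sum_univ_eq_sum_range (fun t => gterm n X m t) (m+1)]
    apply Finset.sum_congr rfl
    intro k _
    have hk2 : (k : ℕ) < n := by omega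
    rw [gterm_eq X (by omega : m < n) hk2]
    have h1 : Y (Fin.last m) k = X ⟨m, by omega⟩ ⟨(k : ℕ), hk2⟩ := by
      show X (Fin.castLE hm (Fin.last m)) (Fin.castLE hm k) = _
      congr 1 <;> (apply Fin.ext; simp)
    have h2 : (Y.submatrix (Fin.castLE k.isLt.le) (Fin.castLE k.isLt.le)).charpoly
        = lead n X (k : ℕ) := by
      rw [lead_eq X (le_of_lt hk2), hY, Matrix.submatrix_submatrix]
      congr 1 <;> (funext x; apply Fin.ext; simp)
    rw [h1, h2]


/-- The explicit lower unipotent matrix, whose subdiagonal rows are the coefficients of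
the characteristic polynomials of the leading principal submatrices of a lower
Hessenberg matrix `X`, conjugates `X` to its companion matrix. -/
theorem hessenberg_conj_companion (n : ℕ) (X : Matrix (Fin n) (Fin n) ℝ)
    (hsup : ∀ i j : Fin n, (j : ℕ) = (i : ℕ) + 1 → X i j = 1)
    (hzero : ∀ i j : Fin n, (j : ℕ) > (i : ℕ) + 1 → X i j = 0)
    (L : Matrix (Fin n) (Fin n) ℝ)
    (hL : ∀ i j : Fin n, L i j =
      if i = j then 1
      else if j < i then
        ((X.submatrix (Fin.castLE i.isLt.le) (Fin.castLE i.isLt.le)).charpoly).coeff (j : ℕ)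
      else 0)
    (cX : Matrix (Fin n) (Fin n) ℝ)
    (hc : ∀ i j : Fin n, cX i j =
      if (j : ℕ) = (i : ℕ) + 1 then 1
      else if (i : ℕ) = n - 1 then -(X.charpoly.coeff (j : ℕ)) else 0) :
    L⁻¹ * X * L = cX := by
  have hL' : ∀ i j : Fin n, L i j = (lead n X (i : ℕ)).coeff (j : ℕ) := by
    intro i j
    rw [hL]
    by_cases h1 : i = j
    · subst h1; rw [if_pos rfl, lead_coeff_self X i.isLt.le]
    · rw [if_neg h1]
      by_cases h2 : j < i
      · rw [if_pos h2, lead_eq X i.isLt.le]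
      · rw [if_neg h2]
        have hv : (i : ℕ) < (j : ℕ) := by
          have a : ¬ ((j : ℕ) < (i : ℕ)) := fun hh => h2 hh
          have b : (i : ℕ) ≠ (j : ℕ) := fun hh => h1 (Fin.ext hh)
          omega
        rw [lead_coeff_zero X i.isLt.le hv]
  have hXL : X * L = L * cX := by
    ext i j
    rw [Matrix.mul_apply, Matrix.mul_apply]
    have hlhs : ∑ k : Fin n, X i k * L k j
        = (∑ k : Fin n, Polynomial.C (X i k) * lead n X (k : ℕ)).coeff (j : ℕ) := by
      rw [Polynomial.finset_sum_coeff]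
      apply Finset.sum_congr rfl; intro k _
      rw [hL', Polynomial.coeff_C_mul]
    have hP : (∑ k : Fin n, Polynomial.C (X i k) * lead n X (k : ℕ))
        = ∑ t ∈ Finset.range n, gterm n X (i : ℕ) t := by
      rw [← Fin.sum_univ_eq_sum_range (fun t => gterm n X (i : ℕ) t) n]
      apply Finset.sum_congr rfl; intro k _
      rw [gterm_eq X i.isLt k.isLt]
    have hQ : ∑ t ∈ Finset.range n, gterm n X (i : ℕ) t
        = Polynomial.X * lead n X (i : ℕ)
          - (if (i : ℕ) = n - 1 then X.charpoly else 0) := by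
      by_cases hlast : (i : ℕ) + 1 = n
      · rw [if_pos (by omega)]
        have hr := lead_rec n X hsup hzero (i : ℕ) (by omega)
        rw [hlast, lead_self] at hr
        linear_combination hr
      · rw [if_neg (by omega)]
        have hi2 : (i : ℕ) + 2 ≤ n := by omega
        have hrec := lead_rec n X hsup hzero (i : ℕ) (by omega)
        have htrunc : ∑ t ∈ Finset.range n, gterm n X (i : ℕ) t
            = ∑ t ∈ Finset.range ((i : ℕ) + 2), gterm n X (i : ℕ) t := by
          symm
          apply Finset.sum_subset (Finset.range_subset_range.mpr hi2)
          intro t ht hnt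
          simp only [Finset.mem_range] at ht hnt
          rw [gterm_eq X i.isLt (by omega)]
          rw [hzero ⟨(i : ℕ), i.isLt⟩ ⟨t, by omega⟩ (show t > (i : ℕ) + 1 by omega)]
          simp
        rw [htrunc, Finset.sum_range_succ,
          gterm_eq X i.isLt (show (i : ℕ) + 1 < n by omega),
          hsup ⟨(i : ℕ), i.isLt⟩ ⟨(i : ℕ) + 1, by omega⟩ rfl, Polynomial.C_1, one_mul, hrec]
        ring
    have hrhs : ∑ k : Fin n, L i k * cX k j
        = (Polynomial.X * lead n X (i : ℕ)).coeff (j : ℕ)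
          + (if (i : ℕ) = n - 1 then -(X.charpoly.coeff (j : ℕ)) else 0) := by
      simp only [hL', hc]
      have hpt : ∀ k : Fin n, (lead n X (i : ℕ)).coeff (k : ℕ) *
          (if (j : ℕ) = (k : ℕ) + 1 then 1
            else if (k : ℕ) = n - 1 then -(X.charpoly.coeff (j : ℕ)) else 0)
          = (if (j : ℕ) = (k : ℕ) + 1 then (lead n X (i : ℕ)).coeff (k : ℕ) else 0)
            + (if (k : ℕ) = n - 1 then
                -((lead n X (i : ℕ)).coeff (k : ℕ) * X.charpoly.coeff (j : ℕ)) else 0) := by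
        intro k
        have hj := j.isLt
        have hk := k.isLt
        split_ifs with h1 h2 <;> first | ring1 | (exfalso; omega)
      rw [Finset.sum_congr rfl (fun k _ => hpt k), Finset.sum_add_distrib]
      congr 1
      · by_cases hj0 : (j : ℕ) = 0
        · rw [Finset.sum_eq_zero (fun k _ => by rw [if_neg (by omega)]), hj0,
            Polynomial.mul_coeff_zero, Polynomial.coeff_X_zero, zero_mul]
        · obtain ⟨t, ht⟩ : ∃ t, (j : ℕ) = t + 1 := ⟨(j : ℕ) - 1, by omega⟩
          have htn : t < n := by have := j.isLt; omega
          simp only [ht, Polynomial.coeff_X_mul]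
          rw [Finset.sum_eq_single (⟨t, htn⟩ : Fin n)]
          · rw [if_pos rfl]
          · intro b _ hb
            exact if_neg (fun hh => hb (Fin.ext (show (b : ℕ) = t by omega)))
          · intro h; exact absurd (Finset.mem_univ _) h
      · have hn1 : n - 1 < n := by have := i.isLt; omega
        rw [Finset.sum_eq_single (⟨n - 1, hn1⟩ : Fin n)]
        · rw [if_pos rfl]
          by_cases hin : (i : ℕ) = n - 1
          · rw [if_pos hin]
            have : (lead n X (i : ℕ)).coeff (n - 1) = 1 := by
              rw [← hin]; exact lead_coeff_self X i.isLt.le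
            rw [this, one_mul]
          · rw [if_neg hin]
            have : (lead n X (i : ℕ)).coeff (n - 1) = 0 := by
              apply lead_coeff_zero X i.isLt.le
              have := i.isLt; omega
            rw [this, zero_mul, neg_zero]
        · intro b _ hb
          exact if_neg (fun hh => hb (Fin.ext (show (b : ℕ) = n - 1 by omega)))
        · intro h; exact absurd (Finset.mem_univ _) h
    rw [hlhs, hrhs, hP, hQ, Polynomial.coeff_sub]
    by_cases hin : (i : ℕ) = n - 1 <;> simp [hin, sub_eq_add_neg]
  have hdet : L.det = 1 := by
    have htri : L.BlockTriangular OrderDual.toDual := by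
      intro a b hab
      rw [hL', lead_coeff_zero X a.isLt.le (show (a : ℕ) < (b : ℕ) from hab)]
    rw [Matrix.det_of_lowerTriangular L htri]
    apply Finset.prod_eq_one; intro a _; rw [hL, if_pos rfl]
  rw [Matrix.mul_assoc, hXL, ← Matrix.mul_assoc,
    Matrix.nonsing_inv_mul L (by rw [hdet]; exact isUnit_one), Matrix.one_mul]
end

section
/- Let $\lambda_1,\dots,\lambda_n$ be distinct real (or complex) numbers, let $\epsilon_\Lambda$ be the upper bidiagonal matrix with diagonal entries $\lambda_1,\dots,\lambda_n$ and superdiagonal entries $1$, and let $U$ be the upper triangular matrix with entries $u_{ij} = \prod_{k=1}^{i-1}(\lambda_j - \lambda_k)$ for $1 \le i \le j \le n$ and $0$ for $i > j$. Then $U$ is invertible and $\epsilon_\Lambda U = U \operatorname{diag}(\lambda_1,\dots,\lambda_n)$, so $\epsilon_\Lambda = U \operatorname{diag}(\lambda_1,\dots,\lambda_n) U^{-1}$. -/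
/-- Diagonalization of the upper bidiagonal matrix `ε_Λ` with distinct diagonal entries
by an explicit upper triangular matrix `U` with entries `∏_{k<i} (λ_j - λ_k)`. -/
theorem bidiagonal_diagonalization (n : ℕ) (lam : Fin n → ℝ)
    (hdist : Function.Injective lam)
    (eps : Matrix (Fin n) (Fin n) ℝ)
    (heps : ∀ i j : Fin n, eps i j =
      if i = j then lam i else if (j : ℕ) = (i : ℕ) + 1 then 1 else 0)
    (U : Matrix (Fin n) (Fin n) ℝ)
    (hU : ∀ i j : Fin n, U i j =
      if i ≤ j then ∏ k ∈ Finset.Iio i, (lam j - lam k) else 0) :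
    IsUnit U.det ∧ eps * U = U * Matrix.diagonal lam ∧
      eps = U * Matrix.diagonal lam * U⁻¹ := by
  have hUtri : U.BlockTriangular id := by
    intro i j hij
    rw [hU]
    exact if_neg (not_le.mpr hij)
  have hdiag : ∀ i : Fin n, U i i ≠ 0 := by
    intro i
    rw [hU, if_pos le_rfl]
    exact Finset.prod_ne_zero_iff.mpr fun k hk =>
      sub_ne_zero_of_ne fun h => (ne_of_lt (Finset.mem_Iio.mp hk)) (hdist h).symm
  have hUnit : IsUnit U.det := by
    rw [Matrix.det_of_upperTriangular hUtri]
    exact isUnit_iff_ne_zero.mpr (Finset.prod_ne_zero_iff.mpr fun i _ => hdiag i)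
  have hmul : eps * U = U * Matrix.diagonal lam := by
    ext i j
    rw [Matrix.mul_apply, Matrix.mul_diagonal]
    have key : ∀ m : Fin n, eps i m * U m j =
        (if i = m then lam i * U m j else 0) +
          (if (m : ℕ) = (i : ℕ) + 1 then U m j else 0) := by
      intro m
      rw [heps]
      by_cases h1 : i = m
      · subst h1; simp
      · by_cases h2 : (m : ℕ) = (i : ℕ) + 1 <;> simp [h1, h2]
    rw [Finset.sum_congr rfl fun m _ => key m, Finset.sum_add_distrib]
    have hs1 : ∑ m : Fin n, (if i = m then lam i * U m j else 0) = lam i * U i j := by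
      rw [Finset.sum_ite_eq Finset.univ i]; simp
    have hs2 : ∑ m : Fin n, (if (m : ℕ) = (i : ℕ) + 1 then U m j else 0) =
        if h : (i : ℕ) + 1 < n then U ⟨(i : ℕ) + 1, h⟩ j else 0 := by
      split_ifs with h
      · rw [Finset.sum_eq_single (⟨(i : ℕ) + 1, h⟩ : Fin n)]
        · simp
        · intro m _ hm
          exact if_neg fun hc => hm (Fin.ext hc)
        · simp
      · apply Finset.sum_eq_zero
        intro m _
        have := m.2
        rw [if_neg]
        omega
    rw [hs1, hs2]
    rcases lt_trichotomy i j with hij | rfl | hij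
    · have hij' : (i : ℕ) < (j : ℕ) := hij
      have h1 : (i : ℕ) + 1 < n := lt_of_le_of_lt hij' j.2
      rw [dif_pos h1, hU (⟨(i : ℕ) + 1, h1⟩ : Fin n) j,
        if_pos (show (⟨(i : ℕ) + 1, h1⟩ : Fin n) ≤ j from hij'),
        hU i j, if_pos hij.le]
      have hins : Finset.Iio (⟨(i : ℕ) + 1, h1⟩ : Fin n) = insert i (Finset.Iio i) := by
        ext k
        simp only [Finset.mem_Iio, Finset.mem_insert, Fin.lt_def, Fin.ext_iff]
        omega
      rw [hins, Finset.prod_insert (by simp)]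
      ring
    · have hz : (if h : (i : ℕ) + 1 < n then U ⟨(i : ℕ) + 1, h⟩ i else 0) = 0 := by
        split_ifs with h
        · rw [hU, if_neg]
          intro hle
          have h2 := Fin.le_def.mp hle
          simp only [Fin.val_mk] at h2
          omega
        · rfl
      rw [hz, add_zero, mul_comm]
    · have hz1 : U i j = 0 := by rw [hU, if_neg (not_le.mpr hij)]
      have hz2 : (if h : (i : ℕ) + 1 < n then U ⟨(i : ℕ) + 1, h⟩ j else 0) = 0 := by
        split_ifs with h
        · rw [hU, if_neg]
          intro hle
          have h2 := Fin.le_def.mp hle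
          simp only [Fin.val_mk] at h2
          have h3 : (j : ℕ) < (i : ℕ) := hij
          omega
        · rfl
      rw [hz1, hz2]
      ring
  refine ⟨hUnit, hmul, ?_⟩
  rw [← hmul, Matrix.mul_assoc, Matrix.mul_nonsing_inv U hUnit, Matrix.mul_one]
end

section
/- Let $\lambda_1,\dots,\lambda_n$ be scalars, and let $L_2$ be the lower unipotent matrix with entries $(L_2)_{ij} = (-1)^{i+j} e_{i-j}(\lambda_1,\dots,\lambda_{i-1})$ for $i > j$ (and $1$'s on the diagonal, $0$ above). Then $L_2^{-1} \epsilon_\Lambda L_2 = c_\Lambda$, where $\epsilon_\Lambda$ is the upper bidiagonal matrix with diagonal $(\lambda_1,\dots,\lambda_n)$ and superdiagonal $1$'s, and $c_\Lambda$ is the companion matrix of $\prod_{i=1}^n (x - \lambda_i)$. -/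
open Polynomial

private lemma esymm_insert' {α : Type*} [DecidableEq α] (f : α → ℝ) {x : α} {s : Finset α}
    (hx : x ∉ s) (m : ℕ) :
    ∑ S ∈ Finset.powersetCard (m+1) (insert x s), ∏ a ∈ S, f a
      = (∑ S ∈ Finset.powersetCard (m+1) s, ∏ a ∈ S, f a)
        + f x * ∑ S ∈ Finset.powersetCard m s, ∏ a ∈ S, f a := by
  rw [Finset.powersetCard_succ_insert hx]
  rw [Finset.sum_union ?dis]
  case dis =>
    rw [Finset.disjoint_right]
    intro S hS hS'
    obtain ⟨t, ht, rfl⟩ := Finset.mem_image.1 hS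
    exact hx ((Finset.mem_powersetCard.1 hS').1 (Finset.mem_insert_self x t))
  congr 1
  rw [Finset.mul_sum, Finset.sum_image ?inj]
  case inj =>
    intro t ht t' ht' h
    have hxt : x ∉ t := fun h' => hx ((Finset.mem_powersetCard.1 ht).1 h')
    have hxt' : x ∉ t' := fun h' => hx ((Finset.mem_powersetCard.1 ht').1 h')
    rw [← Finset.erase_insert hxt, ← Finset.erase_insert hxt', h]
  refine Finset.sum_congr rfl fun t ht => ?_
  have hxt : x ∉ t := fun h' => hx ((Finset.mem_powersetCard.1 ht).1 h')
  rw [Finset.prod_insert hxt]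

private lemma esum_zero_of_card_lt {α : Type*} (f : α → ℝ) {s : Finset α} {m : ℕ}
    (h : s.card < m) : ∑ S ∈ Finset.powersetCard m s, ∏ a ∈ S, f a = 0 := by
  rw [Finset.powersetCard_eq_empty.2 h, Finset.sum_empty]

private lemma esum_zero {α : Type*} (f : α → ℝ) (s : Finset α) :
    ∑ S ∈ Finset.powersetCard 0 s, ∏ a ∈ S, f a = 1 := by
  rw [Finset.powersetCard_zero, Finset.sum_singleton, Finset.prod_empty]

/-- The explicit lower unipotent matrix `L₂`, with entries given by signed elementary
symmetric polynomials, conjugates `ε_Λ` to the companion matrix of `∏ (x - λ_i)`. -/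
theorem bidiagonal_conj_companion (n : ℕ) (lam : Fin n → ℝ)
    (eps : Matrix (Fin n) (Fin n) ℝ)
    (heps : ∀ i j : Fin n, eps i j =
      if i = j then lam i else if (j : ℕ) = (i : ℕ) + 1 then 1 else 0)
    (L2 : Matrix (Fin n) (Fin n) ℝ)
    (hL2 : ∀ i j : Fin n, L2 i j =
      if i = j then 1
      else if j < i then
        (-1 : ℝ) ^ ((i : ℕ) + (j : ℕ)) *
          ∑ S ∈ Finset.powersetCard ((i : ℕ) - (j : ℕ)) (Finset.Iio i),
            ∏ a ∈ S, lam a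
      else 0)
    (cΛ : Matrix (Fin n) (Fin n) ℝ)
    (hc : ∀ i j : Fin n, cΛ i j =
      if (j : ℕ) = (i : ℕ) + 1 then 1
      else if (i : ℕ) = n - 1 then -((∏ l : Fin n, (X - C (lam l))).coeff (j : ℕ))
      else 0) :
    L2⁻¹ * eps * L2 = cΛ := by
  -- basic facts about L2
  have hdiag : ∀ i : Fin n, L2 i i = 1 := by
    intro i; rw [hL2, if_pos rfl]
  have hlowzero : ∀ i j : Fin n, i < j → L2 i j = 0 := by
    intro i j h
    rw [hL2, if_neg (ne_of_lt h), if_neg (asymm h)]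
  have hLform : ∀ i j : Fin n, (j : ℕ) ≤ (i : ℕ) →
      L2 i j = (-1 : ℝ) ^ ((i : ℕ) + (j : ℕ)) *
        ∑ S ∈ Finset.powersetCard ((i : ℕ) - (j : ℕ)) (Finset.Iio i), ∏ a ∈ S, lam a := by
    intro i j h
    rcases eq_or_lt_of_le h with h' | h'
    · have : i = j := Fin.ext h'.symm
      subst this
      rw [hdiag, Nat.sub_self, esum_zero, mul_one, ← two_mul]
      rw [pow_mul]
      norm_num
    · rw [hL2, if_neg, if_pos]
      · exact Fin.lt_def.2 h'
      · exact fun he => absurd (congrArg Fin.val he) (by omega)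
  have hnotmem : ∀ i : Fin n, i ∉ Finset.Iio i := by
    intro i; simp
  have hcardIio : ∀ i : Fin n, (Finset.Iio i).card = (i : ℕ) := fun i => Fin.card_Iio i
  have hIio_succ : ∀ (i k : Fin n), (k : ℕ) = (i : ℕ) + 1 →
      Finset.Iio k = insert i (Finset.Iio i) := by
    intro i k hk
    ext a
    simp only [Finset.mem_Iio, Finset.mem_insert, Fin.lt_def, Fin.ext_iff]
    omega
  have hcoeff : ∀ j : Fin n,
      (∏ l : Fin n, (X - C (lam l))).coeff (j : ℕ)
        = (-1 : ℝ) ^ (n - (j : ℕ)) *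
          ∑ S ∈ Finset.powersetCard (n - (j : ℕ)) Finset.univ, ∏ a ∈ S, lam a := by
    intro j
    have h := Multiset.prod_X_sub_C_coeff (Finset.univ.val.map lam) (k := (j : ℕ))
      (by simp [j.is_lt.le])
    rw [Multiset.map_map, Multiset.card_map] at h
    rw [Finset.esymm_map_val] at h
    rw [Finset.prod_eq_multiset_prod]
    have hcard : Multiset.card (Finset.univ.val (α := Fin n)) = n := by simp
    rw [hcard] at h
    exact h
  -- the key commutation identity
  have key : eps * L2 = L2 * cΛ := by
    ext i j
    have hn0 : 0 < n := i.pos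
    have hjlt : (j : ℕ) < n := j.is_lt
    have hilt : (i : ℕ) < n := i.is_lt
    set last : Fin n := ⟨n - 1, by omega⟩ with hlast
    -- LHS
    have lhs_eq : (eps * L2) i j
        = lam i * L2 i j + ∑ k : Fin n, (if (k : ℕ) = (i : ℕ) + 1 then L2 k j else 0) := by
      rw [Matrix.mul_apply]
      have step : ∀ k : Fin n, eps i k * L2 k j
          = (if i = k then lam i * L2 k j else 0)
            + (if (k : ℕ) = (i : ℕ) + 1 then L2 k j else 0) := by
        intro k
        rw [heps]
        split_ifs with h1 h2 h2 <;> first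
          | (exfalso; subst h1; omega)
          | ring
      rw [Finset.sum_congr rfl fun k _ => step k, Finset.sum_add_distrib,
        Finset.sum_ite_eq Finset.univ i, if_pos (Finset.mem_univ i)]
    -- RHS
    have rhs_eq : (L2 * cΛ) i j
        = (∑ k : Fin n, (if (j : ℕ) = (k : ℕ) + 1 then L2 i k else 0))
          + L2 i last * (-((∏ l : Fin n, (X - C (lam l))).coeff (j : ℕ))) := by
      rw [Matrix.mul_apply]
      have step : ∀ k : Fin n, L2 i k * cΛ k j
          = (if (j : ℕ) = (k : ℕ) + 1 then L2 i k else 0)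
            + (if k = last then L2 i k * (-((∏ l : Fin n, (X - C (lam l))).coeff (j : ℕ)))
               else 0) := by
        intro k
        rw [hc]
        have hklt : (k : ℕ) < n := k.is_lt
        have hkl : (k = last) ↔ ((k : ℕ) = n - 1) := by
          rw [Fin.ext_iff]
        split_ifs with h1 h2 h3 h3 h2 h3 <;>
          first
            | (exfalso; omega)
            | (exfalso; rw [hkl] at *; omega)
            | ring
      rw [Finset.sum_congr rfl fun k _ => step k, Finset.sum_add_distrib,
        Finset.sum_ite_eq' Finset.univ last, if_pos (Finset.mem_univ last)]
    rw [lhs_eq, rhs_eq]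
    -- evaluate the superdiagonal sum
    by_cases hn : (i : ℕ) + 1 < n
    · -- i is not the last row
      set i1 : Fin n := ⟨(i : ℕ) + 1, hn⟩ with hi1
      have hT : (∑ k : Fin n, (if (k : ℕ) = (i : ℕ) + 1 then L2 k j else 0)) = L2 i1 j := by
        have : ∀ k : Fin n, ((k : ℕ) = (i : ℕ) + 1) ↔ (k = i1) := by
          intro k; rw [Fin.ext_iff]
        rw [Finset.sum_congr rfl fun k _ => by rw [if_congr (this k) rfl rfl]]
        rw [Finset.sum_ite_eq' Finset.univ i1, if_pos (Finset.mem_univ i1)]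
      have hLilast : L2 i last = 0 := by
        apply hlowzero
        rw [Fin.lt_def]
        show (i : ℕ) < n - 1
        omega
      rw [hT, hLilast, zero_mul, add_zero]
      -- now: lam i * L2 i j + L2 i1 j = Ssum
      rcases lt_trichotomy ((j : ℕ)) ((i : ℕ) + 1) with hji | hji | hji
      · -- j ≤ i
        have hji' : (j : ℕ) ≤ (i : ℕ) := by omega
        have hIi1 : Finset.Iio i1 = insert i (Finset.Iio i) :=
          hIio_succ i i1 rfl
        have hL1 : L2 i1 j = (-1 : ℝ) ^ ((i : ℕ) + 1 + (j : ℕ)) *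
            ((∑ S ∈ Finset.powersetCard (((i : ℕ) - (j : ℕ)) + 1) (Finset.Iio i),
                ∏ a ∈ S, lam a)
              + lam i * ∑ S ∈ Finset.powersetCard ((i : ℕ) - (j : ℕ)) (Finset.Iio i),
                  ∏ a ∈ S, lam a) := by
          rw [hLform i1 j (by show (j : ℕ) ≤ (i : ℕ) + 1; omega)]
          show (-1 : ℝ) ^ ((i : ℕ) + 1 + (j : ℕ)) * _ = _
          rw [show (i : ℕ) + 1 - (j : ℕ) = ((i : ℕ) - (j : ℕ)) + 1 from by omega,
            hIi1, esymm_insert' lam (hnotmem i)]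
        by_cases hj1 : 1 ≤ (j : ℕ)
        · -- generic case
          have hS : (∑ k : Fin n, (if (j : ℕ) = (k : ℕ) + 1 then L2 i k else 0))
              = L2 i ⟨(j : ℕ) - 1, by omega⟩ := by
            have : ∀ k : Fin n, ((j : ℕ) = (k : ℕ) + 1)
                ↔ (k = (⟨(j : ℕ) - 1, by omega⟩ : Fin n)) := by
              intro k; rw [Fin.ext_iff]; show _ ↔ (k : ℕ) = (j : ℕ) - 1; omega
            rw [Finset.sum_congr rfl fun k _ => by rw [if_congr (this k) rfl rfl]]
            rw [Finset.sum_ite_eq' Finset.univ, if_pos (Finset.mem_univ _)]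
          rw [hS, hL1, hLform i j hji',
            hLform i ⟨(j : ℕ) - 1, by omega⟩ (by show (j : ℕ) - 1 ≤ (i : ℕ); omega)]
          show lam i * ((-1 : ℝ) ^ ((i : ℕ) + (j : ℕ)) * _) + _
            = (-1 : ℝ) ^ ((i : ℕ) + ((j : ℕ) - 1)) *
              (∑ S ∈ Finset.powersetCard ((i : ℕ) - ((j : ℕ) - 1)) (Finset.Iio i),
                ∏ a ∈ S, lam a)
          rw [show (i : ℕ) - ((j : ℕ) - 1) = ((i : ℕ) - (j : ℕ)) + 1 from by omega]
          have e1 : (-1 : ℝ) ^ ((i : ℕ) + 1 + (j : ℕ))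
              = -(-1 : ℝ) ^ ((i : ℕ) + (j : ℕ)) := by
            rw [show (i : ℕ) + 1 + (j : ℕ) = ((i : ℕ) + (j : ℕ)) + 1 from by omega,
              pow_succ]; ring
          have e2 : (-1 : ℝ) ^ ((i : ℕ) + ((j : ℕ) - 1))
              = -(-1 : ℝ) ^ ((i : ℕ) + (j : ℕ)) := by
            rw [show (i : ℕ) + (j : ℕ) = ((i : ℕ) + ((j : ℕ) - 1)) + 1 from by omega,
              pow_succ]; ring
          rw [e1, e2]; ring
        · -- j = 0
          have hj0 : (j : ℕ) = 0 := by omega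
          have hS : (∑ k : Fin n, (if (j : ℕ) = (k : ℕ) + 1 then L2 i k else 0)) = 0 :=
            Finset.sum_eq_zero fun k _ => by rw [if_neg (by omega)]
          have hz : (∑ S ∈ Finset.powersetCard (((i : ℕ) - (j : ℕ)) + 1) (Finset.Iio i),
              ∏ a ∈ S, lam a) = 0 := by
            apply esum_zero_of_card_lt
            rw [hcardIio]; omega
          rw [hS, hL1, hz, hLform i j hji']
          have e1 : (-1 : ℝ) ^ ((i : ℕ) + 1 + (j : ℕ))
              = -(-1 : ℝ) ^ ((i : ℕ) + (j : ℕ)) := by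
            rw [show (i : ℕ) + 1 + (j : ℕ) = ((i : ℕ) + (j : ℕ)) + 1 from by omega,
              pow_succ]; ring
          rw [e1]; ring
      · -- j = i + 1
        have hij : i1 = j := Fin.ext (by show (i : ℕ) + 1 = (j : ℕ); omega)
        have hS : (∑ k : Fin n, (if (j : ℕ) = (k : ℕ) + 1 then L2 i k else 0)) = L2 i i := by
          have : ∀ k : Fin n, ((j : ℕ) = (k : ℕ) + 1) ↔ (k = i) := by
            intro k; rw [Fin.ext_iff]; omega
          rw [Finset.sum_congr rfl fun k _ => by rw [if_congr (this k) rfl rfl]]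
          rw [Finset.sum_ite_eq' Finset.univ, if_pos (Finset.mem_univ _)]
        rw [hS, hij, hdiag, hdiag, hlowzero i j (Fin.lt_def.2 (by omega))]
        ring
      · -- j > i + 1 : everything is zero
        have hS : (∑ k : Fin n, (if (j : ℕ) = (k : ℕ) + 1 then L2 i k else 0)) = 0 := by
          refine Finset.sum_eq_zero fun k _ => ?_
          by_cases hk : (j : ℕ) = (k : ℕ) + 1
          · rw [if_pos hk, hlowzero i k (Fin.lt_def.2 (by omega))]
          · rw [if_neg hk]
        rw [hS, hlowzero i j (Fin.lt_def.2 (by omega)),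
          hlowzero i1 j (Fin.lt_def.2 (by show (i : ℕ) + 1 < (j : ℕ); omega))]
        ring
    · -- i is the last row : (i : ℕ) = n - 1
      have hin : (i : ℕ) = n - 1 := by omega
      have hji' : (j : ℕ) ≤ (i : ℕ) := by omega
      have hT : (∑ k : Fin n, (if (k : ℕ) = (i : ℕ) + 1 then L2 k j else 0)) = 0 :=
        Finset.sum_eq_zero fun k _ => by rw [if_neg (by have := k.is_lt; omega)]
      have hilast : i = last := Fin.ext (by show (i : ℕ) = n - 1; omega)
      have huniv : (Finset.univ : Finset (Fin n)) = insert i (Finset.Iio i) := by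
        ext a
        simp only [Finset.mem_univ, Finset.mem_insert, Finset.mem_Iio, Fin.lt_def,
          Fin.ext_iff, true_iff]
        have := a.is_lt; omega
      have hcj : (∏ l : Fin n, (X - C (lam l))).coeff (j : ℕ)
          = (-1 : ℝ) ^ (n - (j : ℕ)) *
            ((∑ S ∈ Finset.powersetCard (((i : ℕ) - (j : ℕ)) + 1) (Finset.Iio i),
                ∏ a ∈ S, lam a)
              + lam i * ∑ S ∈ Finset.powersetCard ((i : ℕ) - (j : ℕ)) (Finset.Iio i),
                  ∏ a ∈ S, lam a) := by
        rw [hcoeff j, show n - (j : ℕ) = ((i : ℕ) - (j : ℕ)) + 1 from by omega,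
          huniv, esymm_insert' lam (hnotmem i)]
      rw [hT, ← hilast, hdiag i, one_mul]
      have esign : (-1 : ℝ) ^ (n - (j : ℕ)) = -(-1 : ℝ) ^ ((i : ℕ) + (j : ℕ)) := by
        have h2 : ((-1 : ℝ)) ^ ((j : ℕ) + (j : ℕ)) = 1 := by
          rw [← two_mul, pow_mul]; norm_num
        have h3 : (-1 : ℝ) ^ (n - (j : ℕ)) * (-1 : ℝ) ^ ((j : ℕ) + (j : ℕ))
            = (-1 : ℝ) ^ ((i : ℕ) + (j : ℕ) + 1) := by
          rw [← pow_add]; congr 1; omega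
        rw [h2, mul_one] at h3
        rw [h3, pow_succ]; ring
      by_cases hj1 : 1 ≤ (j : ℕ)
      · have hS : (∑ k : Fin n, (if (j : ℕ) = (k : ℕ) + 1 then L2 i k else 0))
            = L2 i ⟨(j : ℕ) - 1, by omega⟩ := by
          have : ∀ k : Fin n, ((j : ℕ) = (k : ℕ) + 1)
              ↔ (k = (⟨(j : ℕ) - 1, by omega⟩ : Fin n)) := by
            intro k; rw [Fin.ext_iff]; show _ ↔ (k : ℕ) = (j : ℕ) - 1; omega
          rw [Finset.sum_congr rfl fun k _ => by rw [if_congr (this k) rfl rfl]]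
          rw [Finset.sum_ite_eq' Finset.univ, if_pos (Finset.mem_univ _)]
        rw [hS, hcj, hLform i j hji',
          hLform i ⟨(j : ℕ) - 1, by omega⟩ (by show (j : ℕ) - 1 ≤ (i : ℕ); omega)]
        show lam i * ((-1 : ℝ) ^ ((i : ℕ) + (j : ℕ)) * _) + 0
          = (-1 : ℝ) ^ ((i : ℕ) + ((j : ℕ) - 1)) *
              (∑ S ∈ Finset.powersetCard ((i : ℕ) - ((j : ℕ) - 1)) (Finset.Iio i),
                ∏ a ∈ S, lam a)
            + -((-1 : ℝ) ^ (n - (j : ℕ)) *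
                ((∑ S ∈ Finset.powersetCard (((i : ℕ) - (j : ℕ)) + 1) (Finset.Iio i),
                    ∏ a ∈ S, lam a)
                  + lam i * ∑ S ∈ Finset.powersetCard ((i : ℕ) - (j : ℕ)) (Finset.Iio i),
                      ∏ a ∈ S, lam a))
        rw [show (i : ℕ) - ((j : ℕ) - 1) = ((i : ℕ) - (j : ℕ)) + 1 from by omega]
        have e2 : (-1 : ℝ) ^ ((i : ℕ) + ((j : ℕ) - 1))
            = -(-1 : ℝ) ^ ((i : ℕ) + (j : ℕ)) := by
          rw [show (i : ℕ) + (j : ℕ) = ((i : ℕ) + ((j : ℕ) - 1)) + 1 from by omega,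
            pow_succ]; ring
        rw [e2, esign]; ring
      · have hj0 : (j : ℕ) = 0 := by omega
        have hS : (∑ k : Fin n, (if (j : ℕ) = (k : ℕ) + 1 then L2 i k else 0)) = 0 :=
          Finset.sum_eq_zero fun k _ => by rw [if_neg (by omega)]
        have hz : (∑ S ∈ Finset.powersetCard (((i : ℕ) - (j : ℕ)) + 1) (Finset.Iio i),
            ∏ a ∈ S, lam a) = 0 := by
          apply esum_zero_of_card_lt; rw [hcardIio]; omega
        rw [hS, hcj, hz, hLform i j hji', esign]; ring
  -- conclude
  have hlow : L2.BlockTriangular OrderDual.toDual := by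
    intro a b hab
    exact hlowzero a b hab
  have hdet : L2.det = 1 := by
    rw [Matrix.det_of_lowerTriangular L2 hlow]
    exact Finset.prod_eq_one fun k _ => hdiag k
  have hunit : IsUnit L2.det := by rw [hdet]; exact isUnit_one
  calc L2⁻¹ * eps * L2 = L2⁻¹ * (eps * L2) := by rw [Matrix.mul_assoc]
    _ = L2⁻¹ * (L2 * cΛ) := by rw [key]
    _ = L2⁻¹ * L2 * cΛ := by rw [Matrix.mul_assoc]
    _ = cΛ := by rw [Matrix.nonsing_inv_mul L2 hunit, one_mul]
end
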